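/- arXiv:2605.19783 — 2 statements merged into one kernel-verified Lean document; each statement's English description precedes it below -/
import Mathlib

section
/- Let R be a commutative ring of prime characteristic p and γ(r) = r^{p-1} dr. Then for all r, s ∈ R the element γ(r+s) − γ(r) − γ(s) lies in the image of d : R → Ω¹_{R/𝔽_p}, i.e. it is an exact 1-form. -/
open MvPolynomial Finset

/-- Auxiliary: the polynomial ring `ℤ[x, y]`. -/
noncomputable abbrev Apoly : Type := MvPolynomial (Fin 2) ℤ

/-- The universal case: in `ℤ[x,y]`, the 1-form
`(x+y)^(p-1) d(x+y) - x^(p-1) dx - y^(p-1) dy` is exact, with potential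
`((x+y)^p - x^p - y^p)/p`. -/
lemma gamma_poly (p : ℕ) (hp : p.Prime) :
    ∃ F : Apoly,
      (X 0 + X 1 : Apoly) ^ (p - 1) • (KaehlerDifferential.D ℤ Apoly) (X 0 + X 1)
        - (X 0 : Apoly) ^ (p - 1) • (KaehlerDifferential.D ℤ Apoly) (X 0)
        - (X 1 : Apoly) ^ (p - 1) • (KaehlerDifferential.D ℤ Apoly) (X 1)
      = (KaehlerDifferential.D ℤ Apoly) F := by
  have hp0 : 0 < p := hp.pos
  set D := KaehlerDifferential.D ℤ Apoly
  refine ⟨∑ i ∈ Ioo 0 p, C ((p.choose i / p : ℕ) : ℤ) * X 0 ^ i * X 1 ^ (p - i), ?_⟩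
  set F : Apoly := ∑ i ∈ Ioo 0 p, C ((p.choose i / p : ℕ) : ℤ) * X 0 ^ i * X 1 ^ (p - i) with hF
  have hrange : Finset.range (p + 1) = insert 0 (insert p (Ioo 0 p)) := by
    ext i; simp [Nat.lt_succ_iff]; omega
  have hpF : (p : Apoly) * F = (X 0 + X 1) ^ p - X 0 ^ p - X 1 ^ p := by
    rw [add_pow, hrange, Finset.sum_insert (by simp; omega), Finset.sum_insert (by simp)]
    rw [hF, Finset.mul_sum]
    have : ∀ i ∈ Ioo 0 p,
        (p : Apoly) * (C ((p.choose i / p : ℕ) : ℤ) * X 0 ^ i * X 1 ^ (p - i))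
          = X 0 ^ i * X 1 ^ (p - i) * (p.choose i : Apoly) := by
      intro i hi
      simp only [mem_Ioo] at hi
      have hdvd : p ∣ p.choose i := hp.dvd_choose_self (by omega) hi.2
      have : (p : Apoly) * C ((p.choose i / p : ℕ) : ℤ) = (p.choose i : Apoly) := by
        rw [show (p : Apoly) = C (p : ℤ) by push_cast; rfl, ← map_mul,
          show ((p : ℤ)) * ((p.choose i / p : ℕ) : ℤ) = ((p.choose i : ℕ) : ℤ) by
            exact_mod_cast Nat.mul_div_cancel' hdvd]
        push_cast; rfl
      ring_nf
      rw [mul_comm ((p:Apoly)) _, mul_assoc, mul_comm (C _) (p:Apoly), this]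
      ring
    rw [Finset.sum_congr rfl this]
    simp [Nat.choose_self, Nat.sub_self]
    ring
  -- differentiate
  have hD : (p : Apoly) • D F
      = p • ((X 0 + X 1 : Apoly) ^ (p - 1) • D (X 0 + X 1))
        - p • ((X 0 : Apoly) ^ (p - 1) • D (X 0))
        - p • ((X 1 : Apoly) ^ (p - 1) • D (X 1)) := by
    have h1 : D ((p : Apoly) * F) = (p : Apoly) • D F := by
      rw [Derivation.leibniz]
      simp
    have h2 := congrArg D hpF
    rw [h1] at h2
    rw [h2]
    simp only [map_sub, Derivation.leibniz_pow]
  set v := (X 0 + X 1 : Apoly) ^ (p - 1) • D (X 0 + X 1)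
        - (X 0 : Apoly) ^ (p - 1) • D (X 0)
        - (X 1 : Apoly) ^ (p - 1) • D (X 1) - D F with hv
  have hpv : p • v = 0 := by
    rw [hv]
    rw [smul_sub, smul_sub, smul_sub]
    rw [← Nat.cast_smul_eq_nsmul Apoly p (D F), hD]
    abel
  have hv0 : v = 0 := by
    have hrepr := congrArg (KaehlerDifferential.mvPolynomialBasis ℤ (Fin 2)).repr hpv
    rw [map_nsmul, map_zero] at hrepr
    have : (KaehlerDifferential.mvPolynomialBasis ℤ (Fin 2)).repr v = 0 := by
      refine Finsupp.ext fun i => ?_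
      have := congrArg (fun f => f i) hrepr
      simp only [Finsupp.smul_apply, Finsupp.coe_zero, Pi.zero_apply] at this
      have hne : (p : Apoly) ≠ 0 := by
        exact_mod_cast Nat.cast_ne_zero.mpr hp0.ne'
      have : (p : Apoly) * ((KaehlerDifferential.mvPolynomialBasis ℤ (Fin 2)).repr v i) = 0 := by
        rw [← nsmul_eq_mul]; exact this
      exact (mul_eq_zero.mp this).resolve_left hne
    exact (KaehlerDifferential.mvPolynomialBasis ℤ (Fin 2)).repr.map_eq_zero_iff.mp this
  exact sub_eq_zero.mp hv0

/-- Let `R` be a commutative ring of prime characteristic `p` and let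
`γ(r) = r^(p-1) • d r ∈ Ω¹_{R/𝔽_p}`.  Then for all `r s : R` the element
`γ(r+s) − γ(r) − γ(s)` is an exact 1-form, i.e. lies in the image of the universal
derivation `d : R → Ω¹_{R/𝔽_p}`. -/
theorem gamma_add_sub_exact (p : ℕ) [Fact p.Prime] (R : Type*) [CommRing R] [CharP R p]
    [Algebra (ZMod p) R] (r s : R) :
    ∃ a : R,
      (r + s) ^ (p - 1) • (KaehlerDifferential.D (ZMod p) R) (r + s)
        - r ^ (p - 1) • (KaehlerDifferential.D (ZMod p) R) r
        - s ^ (p - 1) • (KaehlerDifferential.D (ZMod p) R) s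
      = (KaehlerDifferential.D (ZMod p) R) a := by
  obtain ⟨F, hF⟩ := gamma_poly p (Fact.out)
  letI : Algebra Apoly R := (MvPolynomial.aeval ![r, s] : Apoly →ₐ[ℤ] R).toRingHom.toAlgebra
  haveI : IsScalarTower ℤ Apoly R :=
    IsScalarTower.of_algebraMap_eq' (Subsingleton.elim _ _)
  haveI : SMulCommClass (ZMod p) Apoly R :=
    ⟨fun c a x => by simp [Algebra.smul_def, mul_left_comm]⟩
  have halg : ∀ q : Apoly, algebraMap Apoly R q = MvPolynomial.aeval ![r, s] q := fun q => rfl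
  refine ⟨algebraMap Apoly R F, ?_⟩
  have := congrArg (KaehlerDifferential.map ℤ (ZMod p) Apoly R) hF
  rw [map_sub, map_sub, LinearMap.map_smul, LinearMap.map_smul, LinearMap.map_smul,
    KaehlerDifferential.map_D, KaehlerDifferential.map_D, KaehlerDifferential.map_D,
    KaehlerDifferential.map_D] at this
  have hx : algebraMap Apoly R (X 0) = r := by simp [halg]
  have hy : algebraMap Apoly R (X 1) = s := by simp [halg]
  have hxy : algebraMap Apoly R (X 0 + X 1) = r + s := by simp [halg]
  rw [← algebraMap_smul R ((X 0 + X 1 : Apoly) ^ (p - 1)),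
    ← algebraMap_smul R ((X 0 : Apoly) ^ (p - 1)),
    ← algebraMap_smul R ((X 1 : Apoly) ^ (p - 1)), map_pow, map_pow, map_pow,
    hx, hy, hxy] at this
  exact this
end

section
/- Let R = ℂ⟦x₁,…,xₙ⟧, let g = u·x₁^{a₁}⋯x_m^{a_m} with u a unit and a₁,…,a_m ≥ 1, and let D = V(g), E = V(x₁⋯x_m). Then for every k > 0, for every form ω ∈ Ω^{k−1}_R of the shape ω = f·x₁⋯x_m·(∏_{j∈J} dx_j/x_j)·(∏_{i∈I} dx_i) with J ⊆ {1,…,m}, I ⊆ {m+1,…,n}, |J|+|I| = k−1, the element ω ∧ dg lies in g·Ω^k_R; i.e. the image of ω ∧ dg in Ω^k_R ⊗ R/(g) is zero. -/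
/-!
Write `g = u·P` with `P = ∏ xₜ^{aₜ}` and `ω = (∏_{t ∉ J} xₜ)·w`. Then
`dg = u·dP + P·du` and `dP = ∑ₜ (∂P/∂xₜ)·dxₜ`. For `t ∈ J` the form `w` already contains `dxₜ`,
so `w ∧ dxₜ = 0`; for `t ∉ J` the coefficient of `ω` contains `xₜ`, and `xₜ·∂P/∂xₜ = aₜ·P`.
Hence `ω ∧ dg ∈ P·Ω^k = g·Ω^k`, since `u` is a unit.
-/

open ExteriorAlgebra Pointwise

namespace ExteriorAlgebra

variable {R M : Type*} [CommRing R] [AddCommGroup M] [Module R M]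

theorem list_prod_map_ι_eq_ιMulti (l : List M) :
    (l.map (ι R)).prod = ιMulti R l.length l.get := by
  rw [ιMulti_apply]
  exact congrArg List.prod (List.ofFn_getElem_eq_map l (ι R)).symm

theorem list_prod_map_ι_mem_exteriorPower (l : List M) :
    (l.map (ι R)).prod ∈ ⋀[R]^l.length M := by
  rw [list_prod_map_ι_eq_ιMulti]
  exact ιMulti_range R _ (Set.mem_range_self _)

theorem list_prod_map_ι_eq_zero_of_not_nodup {l : List M} (hl : ¬l.Nodup) :
    (l.map (ι R)).prod = 0 := by
  rw [list_prod_map_ι_eq_ιMulti]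
  exact ιMulti_eq_zero_of_not_inj (List.nodup_iff_injective_get.not.mp hl)

theorem list_prod_map_ι_mul_ι_eq_zero {l : List M} {m : M} (hm : m ∈ l) :
    (l.map (ι R)).prod * ι R m = 0 := by
  have hl : ¬(l ++ [m]).Nodup := by simp [List.nodup_append, hm]
  simpa using list_prod_map_ι_eq_zero_of_not_nodup (R := R) hl

theorem smul_mul_ι (c : R) (w : ExteriorAlgebra R M) (m : M) :
    (c • w) * ι R m = w * ι R (c • m) := by
  rw [map_smul, smul_mul_assoc, mul_smul_comm]

theorem mul_ι_mem {k : ℕ} {w : ExteriorAlgebra R M} (hw : w ∈ ⋀[R]^k M) (m : M) :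
    w * ι R m ∈ ⋀[R]^(k + 1) M := by
  rw [exteriorPower, pow_succ]
  exact Submodule.mul_mem_mul hw (LinearMap.mem_range_self _ m)

end ExteriorAlgebra

namespace Derivation

variable {R A M : Type*} [CommRing R] [CommRing A] [Algebra R A] [AddCommGroup M] [Module A M]
  [Module R M] (D : Derivation R A M)

theorem leibniz_prod {σ : Type*} [DecidableEq σ] (s : Finset σ) (f : σ → A) :
    D (∏ i ∈ s, f i) = ∑ i ∈ s, (∏ j ∈ s.erase i, f j) • D (f i) := by
  induction s using Finset.induction_on with
  | empty => simp
  | @insert a s ha ih =>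
      rw [Finset.prod_insert ha, D.leibniz, ih, Finset.smul_sum, Finset.sum_insert ha,
        Finset.erase_insert ha, add_comm]
      congr 1
      refine Finset.sum_congr rfl fun i hi => ?_
      rw [smul_smul, Finset.erase_insert_of_ne (ne_of_mem_of_not_mem hi ha).symm,
        Finset.prod_insert (fun h => ha (Finset.mem_of_mem_erase h))]

theorem smul_map_pow_self (x : A) (a : ℕ) : x • D (x ^ a) = (a * x ^ a) • D x := by
  rcases a with _ | a
  · simp
  · rw [D.leibniz_pow, Nat.add_sub_cancel, ← Nat.cast_smul_eq_nsmul A, smul_smul, smul_smul,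
      pow_succ]
    ring_nf

theorem prod_smul_prod_erase_smul_map_pow {σ : Type*} [DecidableEq σ] {S T : Finset σ} {t : σ}
    (htS : t ∈ S) (htT : t ∈ T) (x : σ → A) (a : σ → ℕ) :
    (∏ s ∈ T, x s) • (∏ s ∈ S.erase t, x s ^ a s) • D (x t ^ a t)
      = (∏ s ∈ S, x s ^ a s) • (a t * ∏ s ∈ T.erase t, x s) • D (x t) := by
  rw [← Finset.mul_prod_erase T x htT, ← Finset.mul_prod_erase S _ htS, mul_comm (x t),
    mul_smul, smul_comm (x t), D.smul_map_pow_self]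
  simp only [smul_smul]
  congr 1
  ring

end Derivation

namespace ExteriorAlgebra

variable {R A M : Type*} [CommRing R] [CommRing A] [Algebra R A] [AddCommGroup M] [Module A M]
  [Module R M] (D : Derivation R A M)

theorem prod_sdiff_smul_mul_ι_map_prod_pow_mem_smul {σ : Type*} [DecidableEq σ]
    (S J : Finset σ) (x : σ → A) (a : σ → ℕ) {k : ℕ} {w : ExteriorAlgebra A M}
    (hw : w ∈ ⋀[A]^k M) (hwJ : ∀ t ∈ J, w * ι A (D (x t)) = 0) :
    ((∏ t ∈ S \ J, x t) • w) * ι A (D (∏ t ∈ S, x t ^ a t))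
      ∈ (∏ t ∈ S, x t ^ a t) • ⋀[A]^(k + 1) M := by
  rw [D.leibniz_prod, map_sum, Finset.mul_sum]
  refine Submodule.sum_mem _ fun t htS => ?_
  by_cases htJ : t ∈ J
  · rw [D.leibniz_pow, ← Nat.cast_smul_eq_nsmul A, smul_smul, smul_mul_ι, smul_smul, smul_smul,
      map_smul, mul_smul_comm, hwJ t htJ, smul_zero]
    exact zero_mem _
  · rw [smul_mul_ι, D.prod_smul_prod_erase_smul_map_pow htS (Finset.mem_sdiff.mpr ⟨htS, htJ⟩),
      map_smul, map_smul, mul_smul_comm, mul_smul_comm]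
    exact Submodule.smul_mem_pointwise_smul _ _ _ (Submodule.smul_mem _ _ (mul_ι_mem hw _))

theorem prod_sdiff_smul_mul_ι_map_mul_prod_pow_mem_smul {σ : Type*} [DecidableEq σ]
    (S J : Finset σ) (x : σ → A) (a : σ → ℕ) {u : A} (hu : IsUnit u) {k : ℕ}
    {w : ExteriorAlgebra A M} (hw : w ∈ ⋀[A]^k M) (hwJ : ∀ t ∈ J, w * ι A (D (x t)) = 0) :
    ((∏ t ∈ S \ J, x t) • w) * ι A (D (u * ∏ t ∈ S, x t ^ a t))
      ∈ (u * ∏ t ∈ S, x t ^ a t) • ⋀[A]^(k + 1) M := by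
  set P := ∏ t ∈ S, x t ^ a t
  have hmem : ((∏ t ∈ S \ J, x t) • w) * ι A (D (u * P)) ∈ P • ⋀[A]^(k + 1) M := by
    rw [D.leibniz, map_add, map_smul, map_smul, mul_add, mul_smul_comm, mul_smul_comm]
    exact add_mem
      (Submodule.smul_mem _ u (prod_sdiff_smul_mul_ι_map_prod_pow_mem_smul D S J x a hw hwJ))
      (Submodule.smul_mem_pointwise_smul _ _ _ (mul_ι_mem (Submodule.smul_mem _ _ hw) _))
  obtain ⟨η, hη, hPη⟩ := (Submodule.mem_smul_pointwise_iff_exists _ _ _).mp hmem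
  refine (Submodule.mem_smul_pointwise_iff_exists _ _ _).mpr
    ⟨hu.unit⁻¹ • η, Submodule.smul_mem _ _ hη, ?_⟩
  rw [← hPη, Units.smul_def, smul_smul, mul_right_comm, hu.mul_val_inv, one_mul]

end ExteriorAlgebra

theorem log_form_wedge_dg_divisible_general (n m : ℕ)
    (u : MvPowerSeries (Fin n) ℂ) (hu : IsUnit u)
    (a : Fin n → ℕ)
    (K : ℕ) (hK : 0 < K)
    (J I : Finset (Fin n))
    (hcard : J.card + I.card = K - 1)
    (f : MvPowerSeries (Fin n) ℂ) :
    ∃ η : ExteriorAlgebra (MvPowerSeries (Fin n) ℂ) (Ω[MvPowerSeries (Fin n) ℂ⁄ℂ]),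
      η ∈ ⋀[MvPowerSeries (Fin n) ℂ]^K (Ω[MvPowerSeries (Fin n) ℂ⁄ℂ]) ∧
      ((f * ∏ t ∈ (Finset.univ.filter (fun t : Fin n => (t : ℕ) < m)) \ J,
          MvPowerSeries.X t) •
        (((J.sort (· ≤ ·) ++ I.sort (· ≤ ·)).map
          (fun t => ι (MvPowerSeries (Fin n) ℂ)
            ((KaehlerDifferential.D ℂ (MvPowerSeries (Fin n) ℂ)) (MvPowerSeries.X t)))).prod))
        * ι (MvPowerSeries (Fin n) ℂ)
            ((KaehlerDifferential.D ℂ (MvPowerSeries (Fin n) ℂ))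
              (u * ∏ t ∈ Finset.univ.filter (fun t : Fin n => (t : ℕ) < m),
                MvPowerSeries.X t ^ a t))
      = (u * ∏ t ∈ Finset.univ.filter (fun t : Fin n => (t : ℕ) < m),
          MvPowerSeries.X t ^ a t) • η := by
  set L := J.sort (· ≤ ·) ++ I.sort (· ≤ ·)
  set d := fun t => KaehlerDifferential.D ℂ (MvPowerSeries (Fin n) ℂ) (MvPowerSeries.X t)
  have hW : (L.map fun t => ι (MvPowerSeries (Fin n) ℂ) (d t))
      = (L.map d).map (ι (MvPowerSeries (Fin n) ℂ)) := (List.map_map ..).symm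
  have hlen : (L.map d).length = K - 1 := by simp [L, hcard]
  have hWK := list_prod_map_ι_mem_exteriorPower (R := MvPowerSeries (Fin n) ℂ) (L.map d)
  rw [hlen] at hWK
  have hWJ : ∀ t ∈ J, ((L.map d).map (ι (MvPowerSeries (Fin n) ℂ))).prod
      * ι (MvPowerSeries (Fin n) ℂ) (d t) = 0 := fun t ht =>
    list_prod_map_ι_mul_ι_eq_zero
      (List.mem_map_of_mem (List.mem_append_left _ ((J.mem_sort _).mpr ht)))
  rw [hW, mul_comm f, mul_smul]
  obtain ⟨η, hη, h⟩ := (Submodule.mem_smul_pointwise_iff_exists _ _ _).mp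
    (prod_sdiff_smul_mul_ι_map_mul_prod_pow_mem_smul _ _ J MvPowerSeries.X a hu
      (Submodule.smul_mem _ f hWK) fun t ht => by rw [smul_mul_assoc, hWJ t ht, smul_zero])
  rw [Nat.sub_add_cancel hK] at hη
  exact ⟨η, hη, h.symm⟩

/-- Let `R = ℂ⟦x₁,…,xₙ⟧`, let `g = u·x₁^{a₁}⋯x_m^{a_m}` with `u` a unit and
`a₁,…,a_m ≥ 1`, and let `D = V(g)`, `E = V(x₁⋯x_m)`.  Then for every `k > 0` and every form
`ω ∈ Ω^{k-1}_R` of the shape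
`ω = f·x₁⋯x_m·(∏_{j∈J} dx_j/x_j)·(∏_{i∈I} dx_i)` with `J ⊆ {1,…,m}`, `I ⊆ {m+1,…,n}` and
`|J| + |I| = k − 1` (i.e. `ω = f·(∏_{t∈{1,…,m}∖J} x_t)·(⋀_{j∈J} dx_j)∧(⋀_{i∈I} dx_i)`),
the element `ω ∧ dg` lies in `g·Ω^k_R`; that is, its image in `Ω^k_R ⊗ R/(g)` is zero.

Differential forms are realised inside the exterior algebra of the Kähler differentials
`Ω¹_{R/ℂ}`, with `k`-forms being the `k`-th exterior power. -/
theorem log_form_wedge_dg_divisible (n m : ℕ) (hm : m ≤ n)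
    (u : MvPowerSeries (Fin n) ℂ) (hu : IsUnit u)
    (a : Fin n → ℕ)
    (ha : ∀ t ∈ Finset.univ.filter (fun t : Fin n => (t : ℕ) < m), 1 ≤ a t)
    (K : ℕ) (hK : 0 < K)
    (J I : Finset (Fin n))
    (hJ : J ⊆ Finset.univ.filter (fun t : Fin n => (t : ℕ) < m))
    (hI : ∀ i ∈ I, m ≤ (i : ℕ))
    (hcard : J.card + I.card = K - 1)
    (f : MvPowerSeries (Fin n) ℂ) :
    ∃ η : ExteriorAlgebra (MvPowerSeries (Fin n) ℂ) (Ω[MvPowerSeries (Fin n) ℂ⁄ℂ]),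
      η ∈ ⋀[MvPowerSeries (Fin n) ℂ]^K (Ω[MvPowerSeries (Fin n) ℂ⁄ℂ]) ∧
      ((f * ∏ t ∈ (Finset.univ.filter (fun t : Fin n => (t : ℕ) < m)) \ J,
          MvPowerSeries.X t) •
        (((J.sort (· ≤ ·) ++ I.sort (· ≤ ·)).map
          (fun t => ι (MvPowerSeries (Fin n) ℂ)
            ((KaehlerDifferential.D ℂ (MvPowerSeries (Fin n) ℂ)) (MvPowerSeries.X t)))).prod))
        * ι (MvPowerSeries (Fin n) ℂ)
            ((KaehlerDifferential.D ℂ (MvPowerSeries (Fin n) ℂ))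
              (u * ∏ t ∈ Finset.univ.filter (fun t : Fin n => (t : ℕ) < m),
                MvPowerSeries.X t ^ a t))
      = (u * ∏ t ∈ Finset.univ.filter (fun t : Fin n => (t : ℕ) < m),
          MvPowerSeries.X t ^ a t) • η :=
  log_form_wedge_dg_divisible_general n m u hu a K hK J I hcard f
end
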